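/- The left-multiplication operators by y_i and c_i together with the Clifford Demazure operators d_i on PolC_n satisfy the defining relations of the NilHecke Clifford algebra; in particular, as endomorphisms of PolC_n: d_i∘(y_i·) − (y_{i+1}·)∘d_i = ((−1−c_i c_{i+1})·), d_i∘(y_{i+1}·) − (y_i·)∘d_i = ((1−c_i c_{i+1})·), d_i∘(y_j·) = (y_j·)∘d_i for j ≠ i, i+1, d_i∘(c_j·) = (c_{s_i(j)}·)∘d_i for all j, d_i² = 0, d_i∘d_j = d_j∘d_i for |i−j| > 1, and d_i∘d_{i+1}∘d_i = d_{i+1}∘d_i∘d_{i+1}. Consequently PolC_n is a representation of the NilHecke Clifford algebra NHC_n. -/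

import Mathlib

noncomputable section

inductive PolCRel (k : Type) [Field k] (n : ℕ) :
    FreeAlgebra k (Fin n ⊕ Fin n) → FreeAlgebra k (Fin n ⊕ Fin n) → Prop
  | ycomm (i j : Fin n) :
      PolCRel k n (FreeAlgebra.ι k (Sum.inl i) * FreeAlgebra.ι k (Sum.inl j))
        (FreeAlgebra.ι k (Sum.inl j) * FreeAlgebra.ι k (Sum.inl i))
  | cAnticomm (i j : Fin n) (hij : i ≠ j) :
      PolCRel k n (FreeAlgebra.ι k (Sum.inr i) * FreeAlgebra.ι k (Sum.inr j))
        (-(FreeAlgebra.ι k (Sum.inr j) * FreeAlgebra.ι k (Sum.inr i)))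
  | cSq (i : Fin n) :
      PolCRel k n (FreeAlgebra.ι k (Sum.inr i) * FreeAlgebra.ι k (Sum.inr i)) 1
  | ycSame (i : Fin n) :
      PolCRel k n (FreeAlgebra.ι k (Sum.inl i) * FreeAlgebra.ι k (Sum.inr i))
        (-(FreeAlgebra.ι k (Sum.inr i) * FreeAlgebra.ι k (Sum.inl i)))
  | ycDiff (i j : Fin n) (hij : i ≠ j) :
      PolCRel k n (FreeAlgebra.ι k (Sum.inl i) * FreeAlgebra.ι k (Sum.inr j))
        (FreeAlgebra.ι k (Sum.inr j) * FreeAlgebra.ι k (Sum.inl i))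

/-- The polynomial Clifford algebra. -/
abbrev PolC (k : Type) [Field k] (n : ℕ) := RingQuot (PolCRel k n)

/-- The polynomial generators `yᵢ`. -/
def Y (k : Type) [Field k] (n : ℕ) (i : Fin n) : PolC k n :=
  RingQuot.mkAlgHom k (PolCRel k n) (FreeAlgebra.ι k (Sum.inl i))

/-- The Clifford generators `cᵢ`. -/
def Cc (k : Type) [Field k] (n : ℕ) (i : Fin n) : PolC k n :=
  RingQuot.mkAlgHom k (PolCRel k n) (FreeAlgebra.ι k (Sum.inr i))

/-- The defining properties of the `i`-th Clifford Demazure operator. -/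
def DemSpec (k : Type) [Field k] (n : ℕ) (i : ℕ) (hi : i + 1 < n)
    (si : PolC k n →ₐ[k] PolC k n) (d : PolC k n →ₗ[k] PolC k n) : Prop :=
  d 1 = 0 ∧
  d (Y k n ⟨i, by omega⟩) = -1 - Cc k n ⟨i, by omega⟩ * Cc k n ⟨i + 1, hi⟩ ∧
  d (Y k n ⟨i + 1, hi⟩) = 1 - Cc k n ⟨i, by omega⟩ * Cc k n ⟨i + 1, hi⟩ ∧
  (∀ j : Fin n, (j : ℕ) ≠ i → (j : ℕ) ≠ i + 1 → d (Y k n j) = 0) ∧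
  (∀ j : Fin n, d (Cc k n j) = 0) ∧
  (∀ f g : PolC k n, d (f * g) = d f * g + si f * d g)

-- ===== helpers =====

lemma fne {n : ℕ} {p q : Fin n} (h : p.1 ≠ q.1) : p ≠ q := fun hc => h (congrArg Fin.val hc)

lemma swapL {n : ℕ} {a b j : Fin n} (h : j.1 = a.1) : Equiv.swap a b j = b := by
  rw [show j = a from Fin.ext h]; exact Equiv.swap_apply_left a b

lemma swapR {n : ℕ} {a b j : Fin n} (h : j.1 = b.1) : Equiv.swap a b j = a := by
  rw [show j = b from Fin.ext h]; exact Equiv.swap_apply_right a b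

lemma swapN {n : ℕ} {a b j : Fin n} (h1 : j.1 ≠ a.1) (h2 : j.1 ≠ b.1) :
    Equiv.swap a b j = j := Equiv.swap_apply_of_ne_of_ne (fne h1) (fne h2)

lemma swap_swap_comm {α : Type*} [DecidableEq α] {a b c d : α}
    (hac : a ≠ c) (had : a ≠ d) (hbc : b ≠ c) (hbd : b ≠ d) (m : α) :
    Equiv.swap a b (Equiv.swap c d m) = Equiv.swap c d (Equiv.swap a b m) := by
  rcases eq_or_ne m c with h|hmc
  · rw [h]
    have L : Equiv.swap a b (Equiv.swap c d c) = d := by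
      rw [Equiv.swap_apply_left, Equiv.swap_apply_of_ne_of_ne had.symm hbd.symm]
    have R : Equiv.swap c d (Equiv.swap a b c) = d := by
      rw [Equiv.swap_apply_of_ne_of_ne hac.symm hbc.symm, Equiv.swap_apply_left]
    rw [L, R]
  rcases eq_or_ne m d with h|hmd
  · rw [h]
    have L : Equiv.swap a b (Equiv.swap c d d) = c := by
      rw [Equiv.swap_apply_right, Equiv.swap_apply_of_ne_of_ne hac.symm hbc.symm]
    have R : Equiv.swap c d (Equiv.swap a b d) = c := by
      rw [Equiv.swap_apply_of_ne_of_ne had.symm hbd.symm, Equiv.swap_apply_right]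
    rw [L, R]
  rcases eq_or_ne m a with h|hma
  · rw [h]
    have L : Equiv.swap a b (Equiv.swap c d a) = b := by
      rw [Equiv.swap_apply_of_ne_of_ne hac had, Equiv.swap_apply_left]
    have R : Equiv.swap c d (Equiv.swap a b a) = b := by
      rw [Equiv.swap_apply_left, Equiv.swap_apply_of_ne_of_ne hbc hbd]
    rw [L, R]
  rcases eq_or_ne m b with h|hmb
  · rw [h]
    have L : Equiv.swap a b (Equiv.swap c d b) = a := by
      rw [Equiv.swap_apply_of_ne_of_ne hbc hbd, Equiv.swap_apply_right]
    have R : Equiv.swap c d (Equiv.swap a b b) = a := by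
      rw [Equiv.swap_apply_right, Equiv.swap_apply_of_ne_of_ne hac had]
    rw [L, R]
  · have L : Equiv.swap a b (Equiv.swap c d m) = m := by
      rw [Equiv.swap_apply_of_ne_of_ne hmc hmd, Equiv.swap_apply_of_ne_of_ne hma hmb]
    have R : Equiv.swap c d (Equiv.swap a b m) = m := by
      rw [Equiv.swap_apply_of_ne_of_ne hma hmb, Equiv.swap_apply_of_ne_of_ne hmc hmd]
    rw [L, R]

lemma swap_braid {α : Type*} [DecidableEq α] {a b c : α}
    (hab : a ≠ b) (hbc : b ≠ c) (hac : a ≠ c) (m : α) :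
    Equiv.swap a b (Equiv.swap b c (Equiv.swap a b m)) =
      Equiv.swap b c (Equiv.swap a b (Equiv.swap b c m)) := by
  rcases eq_or_ne m a with h|hma
  · rw [h]
    have L : Equiv.swap a b (Equiv.swap b c (Equiv.swap a b a)) = c := by
      rw [Equiv.swap_apply_left, Equiv.swap_apply_left,
        Equiv.swap_apply_of_ne_of_ne hac.symm hbc.symm]
    have R : Equiv.swap b c (Equiv.swap a b (Equiv.swap b c a)) = c := by
      rw [Equiv.swap_apply_of_ne_of_ne hab hac, Equiv.swap_apply_left,
        Equiv.swap_apply_left]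
    rw [L, R]
  rcases eq_or_ne m b with h|hmb
  · rw [h]
    have L : Equiv.swap a b (Equiv.swap b c (Equiv.swap a b b)) = b := by
      rw [Equiv.swap_apply_right, Equiv.swap_apply_of_ne_of_ne hab hac,
        Equiv.swap_apply_left]
    have R : Equiv.swap b c (Equiv.swap a b (Equiv.swap b c b)) = b := by
      rw [Equiv.swap_apply_left, Equiv.swap_apply_of_ne_of_ne hac.symm hbc.symm,
        Equiv.swap_apply_right]
    rw [L, R]
  rcases eq_or_ne m c with h|hmc
  · rw [h]
    have L : Equiv.swap a b (Equiv.swap b c (Equiv.swap a b c)) = a := by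
      rw [Equiv.swap_apply_of_ne_of_ne hac.symm hbc.symm, Equiv.swap_apply_right,
        Equiv.swap_apply_right]
    have R : Equiv.swap b c (Equiv.swap a b (Equiv.swap b c c)) = a := by
      rw [Equiv.swap_apply_right, Equiv.swap_apply_right,
        Equiv.swap_apply_of_ne_of_ne hab hac]
    rw [L, R]
  · have L : Equiv.swap a b (Equiv.swap b c (Equiv.swap a b m)) = m := by
      rw [Equiv.swap_apply_of_ne_of_ne hma hmb, Equiv.swap_apply_of_ne_of_ne hmb hmc,
        Equiv.swap_apply_of_ne_of_ne hma hmb]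
    have R : Equiv.swap b c (Equiv.swap a b (Equiv.swap b c m)) = m := by
      rw [Equiv.swap_apply_of_ne_of_ne hmb hmc, Equiv.swap_apply_of_ne_of_ne hma hmb,
        Equiv.swap_apply_of_ne_of_ne hmb hmc]
    rw [L, R]

-- basic relations in PolC
variable {k : Type} [Field k] {n : ℕ}

lemma C_anti {i j : Fin n} (h : i ≠ j) :
    Cc k n i * Cc k n j = -(Cc k n j * Cc k n i) := by
  have := RingQuot.mkAlgHom_rel k (PolCRel.cAnticomm (k := k) (n := n) i j h)
  simpa [Cc, map_mul, map_neg] using this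


lemma pc_neg_mul (a b : PolC k n) : -a * b = -(a * b) := neg_mul a b
lemma pc_mul_neg (a b : PolC k n) : a * -b = -(a * b) := mul_neg a b
lemma pc_add_mul (a b c : PolC k n) : (a + b) * c = a * c + b * c := add_mul a b c
lemma pc_mul_add (a b c : PolC k n) : a * (b + c) = a * b + a * c := mul_add a b c
lemma pc_mul_zero (a : PolC k n) : a * (0 : PolC k n) = 0 := mul_zero a
lemma pc_zero_mul (a : PolC k n) : (0 : PolC k n) * a = 0 := zero_mul a
lemma pc_sub_mul (a b c : PolC k n) : (a - b) * c = a * c - b * c := sub_mul a b c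
lemma pc_one_mul (a : PolC k n) : (1 : PolC k n) * a = a := one_mul a
lemma pc_mul_assoc (a b c : PolC k n) : a * b * c = a * (b * c) := mul_assoc a b c

lemma Y_comm (i j : Fin n) : Y k n i * Y k n j = Y k n j * Y k n i := by
  have := RingQuot.mkAlgHom_rel k (PolCRel.ycomm (k := k) (n := n) i j)
  simpa [Y, map_mul] using this

lemma C_sq (i : Fin n) : Cc k n i * Cc k n i = 1 := by
  have := RingQuot.mkAlgHom_rel k (PolCRel.cSq (k := k) (n := n) i)
  simpa [Cc, map_mul] using this

lemma YC_same (i : Fin n) : Y k n i * Cc k n i = -(Cc k n i * Y k n i) := by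
  have := RingQuot.mkAlgHom_rel k (PolCRel.ycSame (k := k) (n := n) i)
  simpa [Y, Cc, map_mul, map_neg] using this

lemma YC_diff {i j : Fin n} (hij : i ≠ j) : Y k n i * Cc k n j = Cc k n j * Y k n i := by
  have := RingQuot.mkAlgHom_rel k (PolCRel.ycDiff (k := k) (n := n) i j hij)
  simpa [Y, Cc, map_mul] using this

lemma polc_induction {P : PolC k n → Prop}
    (halg : ∀ r : k, P (algebraMap k (PolC k n) r))
    (hY : ∀ i, P (Y k n i)) (hC : ∀ i, P (Cc k n i))
    (hadd : ∀ x y, P x → P y → P (x + y))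
    (hmul : ∀ x y, P x → P y → P (x * y)) (x : PolC k n) : P x := by
  obtain ⟨a, rfl⟩ := RingQuot.mkAlgHom_surjective k (PolCRel k n) x
  induction a using FreeAlgebra.induction with
  | grade0 r => rw [AlgHom.commutes]; exact halg r
  | grade1 v =>
    cases v with
    | inl i => exact hY i
    | inr i => exact hC i
  | mul a b ha hb => rw [map_mul]; exact hmul _ _ ha hb
  | add a b ha hb => rw [map_add]; exact hadd _ _ ha hb


-- ===== single-index bundle =====

structure DOps (k : Type) [Field k] (n : ℕ) (i : ℕ) (hi : i + 1 < n) where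
  s : PolC k n →ₐ[k] PolC k n
  d : PolC k n →ₗ[k] PolC k n
  hs : ∀ j : Fin n,
      s (Y k n j) = Y k n (Equiv.swap ⟨i, Nat.lt_of_succ_lt hi⟩ ⟨i + 1, hi⟩ j) ∧
      s (Cc k n j) = Cc k n (Equiv.swap ⟨i, Nat.lt_of_succ_lt hi⟩ ⟨i + 1, hi⟩ j)
  spec : DemSpec k n i hi s d

namespace DOps

variable {k : Type} [Field k] {n : ℕ} {i : ℕ} {hi : i + 1 < n} (D : DOps k n i hi)

lemma d1 : D.d 1 = 0 := D.spec.1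

lemma dY0 : D.d (Y k n ⟨i, Nat.lt_of_succ_lt hi⟩) =
    -1 - Cc k n ⟨i, Nat.lt_of_succ_lt hi⟩ * Cc k n ⟨i + 1, hi⟩ := D.spec.2.1

lemma dY1 : D.d (Y k n ⟨i + 1, hi⟩) =
    1 - Cc k n ⟨i, Nat.lt_of_succ_lt hi⟩ * Cc k n ⟨i + 1, hi⟩ := D.spec.2.2.1

lemma dYo (j : Fin n) (h0 : (j : ℕ) ≠ i) (h1 : (j : ℕ) ≠ i + 1) :
    D.d (Y k n j) = 0 := D.spec.2.2.2.1 j h0 h1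

lemma dC (j : Fin n) : D.d (Cc k n j) = 0 := D.spec.2.2.2.2.1 j

lemma dmul (f g : PolC k n) : D.d (f * g) = D.d f * g + D.s f * D.d g :=
  D.spec.2.2.2.2.2 f g

lemma dalg (r : k) : D.d (algebraMap k (PolC k n) r) = 0 := by
  rw [Algebra.algebraMap_eq_smul_one, map_smul, D.d1, smul_zero]

lemma dcc (p q : Fin n) : D.d (Cc k n p * Cc k n q) = 0 := by
  rw [D.dmul, D.dC, D.dC, zero_mul, mul_zero, add_zero]

lemma d1cc (p q : Fin n) : D.d (1 - Cc k n p * Cc k n q) = 0 := by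
  rw [map_sub, D.d1, D.dcc, sub_zero]

lemma dm1cc (p q : Fin n) : D.d (-1 - Cc k n p * Cc k n q) = 0 := by
  rw [map_sub, map_neg, D.d1, D.dcc, neg_zero, sub_zero]

lemma sY (j : Fin n) : D.s (Y k n j) =
    Y k n (Equiv.swap ⟨i, Nat.lt_of_succ_lt hi⟩ ⟨i + 1, hi⟩ j) := (D.hs j).1

lemma sC (j : Fin n) : D.s (Cc k n j) =
    Cc k n (Equiv.swap ⟨i, Nat.lt_of_succ_lt hi⟩ ⟨i + 1, hi⟩ j) := (D.hs j).2

lemma sY0 : D.s (Y k n ⟨i, Nat.lt_of_succ_lt hi⟩) = Y k n ⟨i + 1, hi⟩ := by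
  rw [D.sY, swapL rfl]

lemma sY1 : D.s (Y k n ⟨i + 1, hi⟩) = Y k n ⟨i, Nat.lt_of_succ_lt hi⟩ := by
  rw [D.sY, swapR rfl]

lemma sYo (j : Fin n) (h0 : (j : ℕ) ≠ i) (h1 : (j : ℕ) ≠ i + 1) :
    D.s (Y k n j) = Y k n j := by rw [D.sY, swapN h0 h1]

lemma sC0 : D.s (Cc k n ⟨i, Nat.lt_of_succ_lt hi⟩) = Cc k n ⟨i + 1, hi⟩ := by
  rw [D.sC, swapL rfl]

lemma sC1 : D.s (Cc k n ⟨i + 1, hi⟩) = Cc k n ⟨i, Nat.lt_of_succ_lt hi⟩ := by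
  rw [D.sC, swapR rfl]

lemma sCo (j : Fin n) (h0 : (j : ℕ) ≠ i) (h1 : (j : ℕ) ≠ i + 1) :
    D.s (Cc k n j) = Cc k n j := by rw [D.sC, swapN h0 h1]

lemma ss (f : PolC k n) : D.s (D.s f) = f := by
  induction f using polc_induction with
  | halg r => rw [AlgHom.commutes, AlgHom.commutes]
  | hY j => rw [D.sY, D.sY, Equiv.swap_apply_self]
  | hC j => rw [D.sC, D.sC, Equiv.swap_apply_self]
  | hadd x y hx hy => rw [map_add, map_add, hx, hy]
  | hmul x y hx hy => rw [map_mul, map_mul, hx, hy]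

lemma sd (f : PolC k n) : D.s (D.d f) = - D.d (D.s f) := by
  induction f using polc_induction with
  | halg r => rw [D.dalg, map_zero, AlgHom.commutes, D.dalg, neg_zero]
  | hY j =>
    by_cases h0 : (j : ℕ) = i
    · rw [show j = (⟨i, Nat.lt_of_succ_lt hi⟩ : Fin n) from Fin.ext h0]
      rw [D.dY0, D.sY0, D.dY1, map_sub, map_neg, map_one, map_mul, D.sC0, D.sC1,
        C_anti (show (⟨i, Nat.lt_of_succ_lt hi⟩ : Fin n) ≠ ⟨i + 1, hi⟩ from fne (show i ≠ i + 1 by omega))]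
      abel
    · by_cases h1 : (j : ℕ) = i + 1
      · rw [show j = (⟨i + 1, hi⟩ : Fin n) from Fin.ext h1]
        rw [D.dY1, D.sY1, D.dY0, map_sub, map_one, map_mul, D.sC0, D.sC1,
          C_anti (show (⟨i, Nat.lt_of_succ_lt hi⟩ : Fin n) ≠ ⟨i + 1, hi⟩ from fne (show i ≠ i + 1 by omega))]
        abel
      · rw [D.dYo j h0 h1, map_zero, D.sYo j h0 h1, D.dYo j h0 h1, neg_zero]
  | hC j => rw [D.dC, map_zero, D.sC, D.dC, neg_zero]
  | hadd x y hx hy => rw [map_add, map_add, hx, hy, map_add, map_add, neg_add]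
  | hmul x y hx hy =>
    rw [D.dmul, map_add, map_mul, map_mul, hx, hy, D.ss, map_mul, D.dmul, D.ss,
      pc_neg_mul, pc_mul_neg]
    abel

lemma dd0 (f : PolC k n) : D.d (D.d f) = 0 := by
  induction f using polc_induction with
  | halg r => rw [D.dalg, map_zero]
  | hY j =>
    by_cases h0 : (j : ℕ) = i
    · rw [show j = (⟨i, Nat.lt_of_succ_lt hi⟩ : Fin n) from Fin.ext h0, D.dY0, D.dm1cc]
    · by_cases h1 : (j : ℕ) = i + 1
      · rw [show j = (⟨i + 1, hi⟩ : Fin n) from Fin.ext h1, D.dY1, D.d1cc]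
      · rw [D.dYo j h0 h1, map_zero]
  | hC j => rw [D.dC, map_zero]
  | hadd x y hx hy => rw [map_add, map_add, hx, hy, add_zero]
  | hmul x y hx hy =>
    rw [D.dmul, map_add, D.dmul, D.dmul, hx, hy, D.sd, zero_mul, mul_zero, add_zero,
      pc_neg_mul]
    abel

end DOps


-- ===== far commutation =====

section Far

variable {k : Type} [Field k] {n : ℕ} {i j : ℕ} {hi : i + 1 < n} {hj : j + 1 < n}
variable (hij : i + 1 < j) (D : DOps k n i hi) (E : DOps k n j hj)

include hij

lemma far_ss (f : PolC k n) : D.s (E.s f) = E.s (D.s f) := by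
  have hsw : ∀ m : Fin n,
      Equiv.swap (⟨i, Nat.lt_of_succ_lt hi⟩ : Fin n) ⟨i + 1, hi⟩
        (Equiv.swap ⟨j, Nat.lt_of_succ_lt hj⟩ ⟨j + 1, hj⟩ m) =
      Equiv.swap (⟨j, Nat.lt_of_succ_lt hj⟩ : Fin n) ⟨j + 1, hj⟩
        (Equiv.swap ⟨i, Nat.lt_of_succ_lt hi⟩ ⟨i + 1, hi⟩ m) := fun m =>
    swap_swap_comm (fne (show i ≠ j by omega)) (fne (show i ≠ j + 1 by omega))
      (fne (show i + 1 ≠ j by omega)) (fne (show i + 1 ≠ j + 1 by omega)) m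
  induction f using polc_induction with
  | halg r => simp only [AlgHom.commutes]
  | hY m => rw [E.sY, D.sY, D.sY, E.sY, hsw]
  | hC m => rw [E.sC, D.sC, D.sC, E.sC, hsw]
  | hadd x y hx hy => rw [map_add, map_add, hx, hy, map_add, map_add]
  | hmul x y hx hy => rw [map_mul, map_mul, hx, hy, map_mul, map_mul]

lemma far_sd (f : PolC k n) : D.s (E.d f) = E.d (D.s f) := by
  induction f using polc_induction with
  | halg r => rw [E.dalg, map_zero, AlgHom.commutes, E.dalg]
  | hY m =>
    by_cases h0 : (m : ℕ) = j
    · rw [show m = (⟨j, Nat.lt_of_succ_lt hj⟩ : Fin n) from Fin.ext h0]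
      rw [E.dY0, D.sYo _ (show j ≠ i by omega) (show j ≠ i + 1 by omega), E.dY0,
        map_sub, map_neg, map_one, map_mul,
        D.sCo _ (show j ≠ i by omega) (show j ≠ i + 1 by omega),
        D.sCo _ (show j + 1 ≠ i by omega) (show j + 1 ≠ i + 1 by omega)]
    · by_cases h1 : (m : ℕ) = j + 1
      · rw [show m = (⟨j + 1, hj⟩ : Fin n) from Fin.ext h1]
        rw [E.dY1, D.sYo _ (show j + 1 ≠ i by omega) (show j + 1 ≠ i + 1 by omega),
          E.dY1, map_sub, map_one, map_mul,
          D.sCo _ (show j ≠ i by omega) (show j ≠ i + 1 by omega),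
          D.sCo _ (show j + 1 ≠ i by omega) (show j + 1 ≠ i + 1 by omega)]
      · by_cases h2 : (m : ℕ) = i
        · rw [show m = (⟨i, Nat.lt_of_succ_lt hi⟩ : Fin n) from Fin.ext h2]
          rw [E.dYo _ (show i ≠ j by omega) (show i ≠ j + 1 by omega), map_zero,
            D.sY0, E.dYo _ (show i + 1 ≠ j by omega) (show i + 1 ≠ j + 1 by omega)]
        · by_cases h3 : (m : ℕ) = i + 1
          · rw [show m = (⟨i + 1, hi⟩ : Fin n) from Fin.ext h3]
            rw [E.dYo _ (show i + 1 ≠ j by omega) (show i + 1 ≠ j + 1 by omega),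
              map_zero, D.sY1,
              E.dYo _ (show i ≠ j by omega) (show i ≠ j + 1 by omega)]
          · rw [E.dYo _ h0 h1, map_zero, D.sYo _ h2 h3, E.dYo _ h0 h1]
  | hC m => rw [E.dC, map_zero, D.sC, E.dC]
  | hadd x y hx hy => rw [map_add, map_add, hx, hy, map_add, map_add]
  | hmul x y hx hy =>
    rw [E.dmul, map_add, map_mul, map_mul, hx, hy, far_ss hij D E, map_mul, E.dmul]

lemma far_ds (f : PolC k n) : E.s (D.d f) = D.d (E.s f) := by
  induction f using polc_induction with
  | halg r => rw [D.dalg, map_zero, AlgHom.commutes, D.dalg]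
  | hY m =>
    by_cases h0 : (m : ℕ) = i
    · rw [show m = (⟨i, Nat.lt_of_succ_lt hi⟩ : Fin n) from Fin.ext h0]
      rw [D.dY0, E.sYo _ (show i ≠ j by omega) (show i ≠ j + 1 by omega), D.dY0,
        map_sub, map_neg, map_one, map_mul,
        E.sCo _ (show i ≠ j by omega) (show i ≠ j + 1 by omega),
        E.sCo _ (show i + 1 ≠ j by omega) (show i + 1 ≠ j + 1 by omega)]
    · by_cases h1 : (m : ℕ) = i + 1
      · rw [show m = (⟨i + 1, hi⟩ : Fin n) from Fin.ext h1]
        rw [D.dY1, E.sYo _ (show i + 1 ≠ j by omega) (show i + 1 ≠ j + 1 by omega),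
          D.dY1, map_sub, map_one, map_mul,
          E.sCo _ (show i ≠ j by omega) (show i ≠ j + 1 by omega),
          E.sCo _ (show i + 1 ≠ j by omega) (show i + 1 ≠ j + 1 by omega)]
      · by_cases h2 : (m : ℕ) = j
        · rw [show m = (⟨j, Nat.lt_of_succ_lt hj⟩ : Fin n) from Fin.ext h2]
          rw [D.dYo _ (show j ≠ i by omega) (show j ≠ i + 1 by omega), map_zero,
            E.sY0, D.dYo _ (show j + 1 ≠ i by omega) (show j + 1 ≠ i + 1 by omega)]
        · by_cases h3 : (m : ℕ) = j + 1
          · rw [show m = (⟨j + 1, hj⟩ : Fin n) from Fin.ext h3]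
            rw [D.dYo _ (show j + 1 ≠ i by omega) (show j + 1 ≠ i + 1 by omega),
              map_zero, E.sY1,
              D.dYo _ (show j ≠ i by omega) (show j ≠ i + 1 by omega)]
          · rw [D.dYo _ h0 h1, map_zero, E.sYo _ h2 h3, D.dYo _ h0 h1]
  | hC m => rw [D.dC, map_zero, E.sC, D.dC]
  | hadd x y hx hy => rw [map_add, map_add, hx, hy, map_add, map_add]
  | hmul x y hx hy =>
    rw [D.dmul, map_add, map_mul, map_mul, hx, hy, ← far_ss hij D E, map_mul, D.dmul]

lemma far_dd (f : PolC k n) : D.d (E.d f) = E.d (D.d f) := by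
  induction f using polc_induction with
  | halg r => rw [E.dalg, map_zero, D.dalg, map_zero]
  | hY m =>
    by_cases h0 : (m : ℕ) = j
    · rw [show m = (⟨j, Nat.lt_of_succ_lt hj⟩ : Fin n) from Fin.ext h0]
      rw [E.dY0, D.dm1cc, D.dYo _ (show j ≠ i by omega) (show j ≠ i + 1 by omega),
        map_zero]
    · by_cases h1 : (m : ℕ) = j + 1
      · rw [show m = (⟨j + 1, hj⟩ : Fin n) from Fin.ext h1]
        rw [E.dY1, D.d1cc,
          D.dYo _ (show j + 1 ≠ i by omega) (show j + 1 ≠ i + 1 by omega), map_zero]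
      · by_cases h2 : (m : ℕ) = i
        · rw [show m = (⟨i, Nat.lt_of_succ_lt hi⟩ : Fin n) from Fin.ext h2]
          rw [E.dYo _ (show i ≠ j by omega) (show i ≠ j + 1 by omega), map_zero,
            D.dY0, E.dm1cc]
        · by_cases h3 : (m : ℕ) = i + 1
          · rw [show m = (⟨i + 1, hi⟩ : Fin n) from Fin.ext h3]
            rw [E.dYo _ (show i + 1 ≠ j by omega) (show i + 1 ≠ j + 1 by omega),
              map_zero, D.dY1, E.d1cc]
          · rw [E.dYo _ h0 h1, map_zero, D.dYo _ h2 h3, map_zero]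
  | hC m => rw [E.dC, map_zero, D.dC, map_zero]
  | hadd x y hx hy => rw [map_add, map_add, hx, hy, map_add, map_add]
  | hmul x y hx hy =>
    rw [E.dmul, map_add, D.dmul, D.dmul, hx, hy, far_sd hij D E,
      ← far_ds hij D E, far_ss hij D E, D.dmul, map_add, E.dmul, E.dmul]
    abel

end Far


-- ===== braid relations =====

section Braid

variable {k : Type} [Field k] {n i : ℕ} {hi : i + 1 < n} {hi2 : i + 1 + 1 < n}
variable (D : DOps k n i hi) (E : DOps k n (i + 1) hi2)

include D E

lemma EsY0 : E.s (Y k n ⟨i, Nat.lt_of_succ_lt hi⟩) = Y k n ⟨i, Nat.lt_of_succ_lt hi⟩ :=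
  E.sYo _ (show i ≠ i + 1 by omega) (show i ≠ i + 1 + 1 by omega)

lemma EsC0 : E.s (Cc k n ⟨i, Nat.lt_of_succ_lt hi⟩) = Cc k n ⟨i, Nat.lt_of_succ_lt hi⟩ :=
  E.sCo _ (show i ≠ i + 1 by omega) (show i ≠ i + 1 + 1 by omega)

lemma DsY2 : D.s (Y k n ⟨i + 1 + 1, hi2⟩) = Y k n ⟨i + 1 + 1, hi2⟩ :=
  D.sYo _ (show i + 1 + 1 ≠ i by omega) (show i + 1 + 1 ≠ i + 1 by omega)

lemma DsC2 : D.s (Cc k n ⟨i + 1 + 1, hi2⟩) = Cc k n ⟨i + 1 + 1, hi2⟩ :=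
  D.sCo _ (show i + 1 + 1 ≠ i by omega) (show i + 1 + 1 ≠ i + 1 by omega)

lemma DdY2 : D.d (Y k n ⟨i + 1 + 1, hi2⟩) = 0 :=
  D.dYo _ (show i + 1 + 1 ≠ i by omega) (show i + 1 + 1 ≠ i + 1 by omega)

lemma EdY0 : E.d (Y k n ⟨i, Nat.lt_of_succ_lt hi⟩) = 0 :=
  E.dYo _ (show i ≠ i + 1 by omega) (show i ≠ i + 1 + 1 by omega)

lemma br_sss (f : PolC k n) : D.s (E.s (D.s f)) = E.s (D.s (E.s f)) := by
  have hsw : ∀ m : Fin n,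
      Equiv.swap (⟨i, Nat.lt_of_succ_lt hi⟩ : Fin n) ⟨i + 1, hi⟩
        (Equiv.swap ⟨i + 1, Nat.lt_of_succ_lt hi2⟩ ⟨i + 1 + 1, hi2⟩
          (Equiv.swap ⟨i, Nat.lt_of_succ_lt hi⟩ ⟨i + 1, hi⟩ m)) =
      Equiv.swap (⟨i + 1, Nat.lt_of_succ_lt hi2⟩ : Fin n) ⟨i + 1 + 1, hi2⟩
        (Equiv.swap ⟨i, Nat.lt_of_succ_lt hi⟩ ⟨i + 1, hi⟩
          (Equiv.swap ⟨i + 1, Nat.lt_of_succ_lt hi2⟩ ⟨i + 1 + 1, hi2⟩ m)) := fun m =>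
    swap_braid (fne (show i ≠ i + 1 by omega)) (fne (show i + 1 ≠ i + 1 + 1 by omega))
      (fne (show i ≠ i + 1 + 1 by omega)) m
  induction f using polc_induction with
  | halg r => simp only [AlgHom.commutes]
  | hY m => rw [D.sY, E.sY, D.sY, E.sY, D.sY, E.sY, hsw]
  | hC m => rw [D.sC, E.sC, D.sC, E.sC, D.sC, E.sC, hsw]
  | hadd x y hx hy => simp only [map_add, hx, hy]
  | hmul x y hx hy => simp only [map_mul, hx, hy]

lemma br_I1 (f : PolC k n) : D.s (E.s (D.d f)) = E.d (D.s (E.s f)) := by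
  induction f using polc_induction with
  | halg r => simp only [D.dalg, map_zero, AlgHom.commutes, E.dalg]
  | hY m =>
    by_cases h0 : (m : ℕ) = i
    · rw [show m = (⟨i, Nat.lt_of_succ_lt hi⟩ : Fin n) from Fin.ext h0]
      rw [D.dY0, EsY0 D E, D.sY0, E.dY0, map_sub, map_neg, map_one, map_mul,
        EsC0 D E, E.sC0, map_sub, map_neg, map_one, map_mul, D.sC0, DsC2 D E]
    · by_cases h1 : (m : ℕ) = i + 1
      · rw [show m = (⟨i + 1, hi⟩ : Fin n) from Fin.ext h1]
        rw [D.dY1, E.sY0, DsY2 D E, E.dY1, map_sub, map_one, map_mul,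
          EsC0 D E, E.sC0, map_sub, map_one, map_mul, D.sC0, DsC2 D E]
      · by_cases h2 : (m : ℕ) = i + 1 + 1
        · rw [show m = (⟨i + 1 + 1, hi2⟩ : Fin n) from Fin.ext h2]
          rw [DdY2 D E, map_zero, map_zero, E.sY1, D.sY1, EdY0 D E]
        · rw [D.dYo m h0 h1, map_zero, map_zero, E.sYo m h1 h2, D.sYo m h0 h1,
            E.dYo m h1 h2]
  | hC m => rw [D.dC, map_zero, map_zero, E.sC, D.sC, E.dC]
  | hadd x y hx hy => simp only [map_add, hx, hy]
  | hmul x y hx hy =>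
    simp only [D.dmul, E.dmul, map_add, map_mul, hx, hy, br_sss D E]

lemma br_I2 (f : PolC k n) : D.d (E.s (D.s f)) = E.s (D.s (E.d f)) := by
  induction f using polc_induction with
  | halg r => simp only [AlgHom.commutes, D.dalg, E.dalg, map_zero]
  | hY m =>
    by_cases h0 : (m : ℕ) = i
    · rw [show m = (⟨i, Nat.lt_of_succ_lt hi⟩ : Fin n) from Fin.ext h0]
      rw [D.sY0, E.sY0, DdY2 D E, EdY0 D E, map_zero, map_zero]
    · by_cases h1 : (m : ℕ) = i + 1
      · rw [show m = (⟨i + 1, hi⟩ : Fin n) from Fin.ext h1]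
        rw [D.sY1, EsY0 D E, D.dY0, E.dY0, map_sub, map_neg, map_one, map_mul,
          D.sC1, DsC2 D E, map_sub, map_neg, map_one, map_mul, EsC0 D E, E.sC1]
      · by_cases h2 : (m : ℕ) = i + 1 + 1
        · rw [show m = (⟨i + 1 + 1, hi2⟩ : Fin n) from Fin.ext h2]
          rw [DsY2 D E, E.sY1, D.dY1, E.dY1, map_sub, map_one, map_mul,
            D.sC1, DsC2 D E, map_sub, map_one, map_mul, EsC0 D E, E.sC1]
        · rw [D.sYo m h0 h1, E.sYo m h1 h2, D.dYo m h0 h1, E.dYo m h1 h2,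
            map_zero, map_zero]
  | hC m => rw [D.sC, E.sC, D.dC, E.dC, map_zero, map_zero]
  | hadd x y hx hy => simp only [map_add, hx, hy]
  | hmul x y hx hy =>
    simp only [D.dmul, E.dmul, map_add, map_mul, hx, hy, br_sss D E]

lemma br_I3 (f : PolC k n) :
    D.s (E.d (D.d f)) + D.d (E.d (D.s f)) = E.d (D.s (E.d f)) := by
  induction f using polc_induction with
  | halg r =>
    simp only [D.dalg, E.dalg, map_zero, AlgHom.commutes, add_zero]
  | hY m =>
    by_cases h0 : (m : ℕ) = i
    · rw [show m = (⟨i, Nat.lt_of_succ_lt hi⟩ : Fin n) from Fin.ext h0]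
      simp only [D.dY0, D.dY1, D.sY0, D.sY1, D.sC0, D.sC1, E.dY0, E.dY1, E.sY0, E.sY1,
        E.sC0, E.sC1, EsY0 D E, EsC0 D E, DsY2 D E, DsC2 D E, DdY2 D E, EdY0 D E,
        D.d1, E.d1, D.dcc, E.dcc, map_sub, map_neg, map_one, map_mul, map_zero,
        sub_zero, neg_zero, zero_sub, sub_self, add_zero, zero_add, neg_neg]
    · by_cases h1 : (m : ℕ) = i + 1
      · rw [show m = (⟨i + 1, hi⟩ : Fin n) from Fin.ext h1]
        simp only [D.dY0, D.dY1, D.sY0, D.sY1, D.sC0, D.sC1, E.dY0, E.dY1, E.sY0, E.sY1,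
        E.sC0, E.sC1, EsY0 D E, EsC0 D E, DsY2 D E, DsC2 D E, DdY2 D E, EdY0 D E,
        D.d1, E.d1, D.dcc, E.dcc, map_sub, map_neg, map_one, map_mul, map_zero,
        sub_zero, neg_zero, zero_sub, sub_self, add_zero, zero_add, neg_neg]
      · by_cases h2 : (m : ℕ) = i + 1 + 1
        · rw [show m = (⟨i + 1 + 1, hi2⟩ : Fin n) from Fin.ext h2]
          simp only [D.dY0, D.dY1, D.sY0, D.sY1, D.sC0, D.sC1, E.dY0, E.dY1, E.sY0, E.sY1,
        E.sC0, E.sC1, EsY0 D E, EsC0 D E, DsY2 D E, DsC2 D E, DdY2 D E, EdY0 D E,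
        D.d1, E.d1, D.dcc, E.dcc, map_sub, map_neg, map_one, map_mul, map_zero,
        sub_zero, neg_zero, zero_sub, sub_self, add_zero, zero_add, neg_neg]
        · simp only [D.dYo m h0 h1, E.dYo m h1 h2, D.sYo m h0 h1, E.sYo m h1 h2,
            map_zero, add_zero, zero_add]
  | hC m => simp only [D.dC, E.dC, D.sC, map_zero, add_zero]
  | hadd x y hx hy =>
    simp only [map_add]
    rw [← hx, ← hy]; abel
  | hmul x y hx hy =>
    simp only [D.dmul, E.dmul, map_add, map_mul]
    rw [← hx, ← hy]
    simp only [br_I1 D E, br_I2 D E, br_sss D E, D.sd, E.sd, pc_mul_neg, pc_neg_mul,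
      pc_add_mul, pc_mul_add]
    abel

lemma br_I4 (f : PolC k n) :
    D.d (E.s (D.d f)) = E.s (D.d (E.d f)) + E.d (D.d (E.s f)) := by
  induction f using polc_induction with
  | halg r =>
    simp only [D.dalg, E.dalg, map_zero, AlgHom.commutes, add_zero]
  | hY m =>
    by_cases h0 : (m : ℕ) = i
    · rw [show m = (⟨i, Nat.lt_of_succ_lt hi⟩ : Fin n) from Fin.ext h0]
      simp only [D.dY0, D.dY1, D.sY0, D.sY1, D.sC0, D.sC1, E.dY0, E.dY1, E.sY0, E.sY1,
        E.sC0, E.sC1, EsY0 D E, EsC0 D E, DsY2 D E, DsC2 D E, DdY2 D E, EdY0 D E,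
        D.d1, E.d1, D.dcc, E.dcc, map_sub, map_neg, map_one, map_mul, map_zero,
        sub_zero, neg_zero, zero_sub, sub_self, add_zero, zero_add, neg_neg]
    · by_cases h1 : (m : ℕ) = i + 1
      · rw [show m = (⟨i + 1, hi⟩ : Fin n) from Fin.ext h1]
        simp only [D.dY0, D.dY1, D.sY0, D.sY1, D.sC0, D.sC1, E.dY0, E.dY1, E.sY0, E.sY1,
        E.sC0, E.sC1, EsY0 D E, EsC0 D E, DsY2 D E, DsC2 D E, DdY2 D E, EdY0 D E,
        D.d1, E.d1, D.dcc, E.dcc, map_sub, map_neg, map_one, map_mul, map_zero,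
        sub_zero, neg_zero, zero_sub, sub_self, add_zero, zero_add, neg_neg]
      · by_cases h2 : (m : ℕ) = i + 1 + 1
        · rw [show m = (⟨i + 1 + 1, hi2⟩ : Fin n) from Fin.ext h2]
          simp only [D.dY0, D.dY1, D.sY0, D.sY1, D.sC0, D.sC1, E.dY0, E.dY1, E.sY0, E.sY1,
        E.sC0, E.sC1, EsY0 D E, EsC0 D E, DsY2 D E, DsC2 D E, DdY2 D E, EdY0 D E,
        D.d1, E.d1, D.dcc, E.dcc, map_sub, map_neg, map_one, map_mul, map_zero,
        sub_zero, neg_zero, zero_sub, sub_self, add_zero, zero_add, neg_neg]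
        · simp only [D.dYo m h0 h1, E.dYo m h1 h2, D.sYo m h0 h1, E.sYo m h1 h2,
            map_zero, add_zero, zero_add]
  | hC m => rw [D.dC, map_zero, map_zero, E.dC, map_zero, map_zero, E.sC, D.dC,
      map_zero, add_zero]
  | hadd x y hx hy =>
    simp only [map_add, hx, hy]; abel
  | hmul x y hx hy =>
    simp only [D.dmul, E.dmul, map_add, map_mul]
    simp only [hx, hy, br_I1 D E, br_I2 D E, br_sss D E, E.sd, pc_mul_neg,
      pc_neg_mul, pc_add_mul, pc_mul_add]
    abel

lemma br_ddd (f : PolC k n) : D.d (E.d (D.d f)) = E.d (D.d (E.d f)) := by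
  induction f using polc_induction with
  | halg r => simp only [D.dalg, E.dalg, map_zero]
  | hY m =>
    by_cases h0 : (m : ℕ) = i
    · rw [show m = (⟨i, Nat.lt_of_succ_lt hi⟩ : Fin n) from Fin.ext h0]
      simp only [D.dY0, D.dY1, D.sY0, D.sY1, D.sC0, D.sC1, E.dY0, E.dY1, E.sY0, E.sY1,
        E.sC0, E.sC1, EsY0 D E, EsC0 D E, DsY2 D E, DsC2 D E, DdY2 D E, EdY0 D E,
        D.d1, E.d1, D.dcc, E.dcc, map_sub, map_neg, map_one, map_mul, map_zero,
        sub_zero, neg_zero, zero_sub, sub_self, add_zero, zero_add, neg_neg]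
    · by_cases h1 : (m : ℕ) = i + 1
      · rw [show m = (⟨i + 1, hi⟩ : Fin n) from Fin.ext h1]
        simp only [D.dY0, D.dY1, D.sY0, D.sY1, D.sC0, D.sC1, E.dY0, E.dY1, E.sY0, E.sY1,
        E.sC0, E.sC1, EsY0 D E, EsC0 D E, DsY2 D E, DsC2 D E, DdY2 D E, EdY0 D E,
        D.d1, E.d1, D.dcc, E.dcc, map_sub, map_neg, map_one, map_mul, map_zero,
        sub_zero, neg_zero, zero_sub, sub_self, add_zero, zero_add, neg_neg]
      · by_cases h2 : (m : ℕ) = i + 1 + 1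
        · rw [show m = (⟨i + 1 + 1, hi2⟩ : Fin n) from Fin.ext h2]
          simp only [D.dY0, D.dY1, D.sY0, D.sY1, D.sC0, D.sC1, E.dY0, E.dY1, E.sY0, E.sY1,
        E.sC0, E.sC1, EsY0 D E, EsC0 D E, DsY2 D E, DsC2 D E, DdY2 D E, EdY0 D E,
        D.d1, E.d1, D.dcc, E.dcc, map_sub, map_neg, map_one, map_mul, map_zero,
        sub_zero, neg_zero, zero_sub, sub_self, add_zero, zero_add, neg_neg]
        · simp only [D.dYo m h0 h1, E.dYo m h1 h2, D.sYo m h0 h1, E.sYo m h1 h2,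
            map_zero, add_zero, zero_add]
  | hC m => rw [D.dC, map_zero, map_zero, E.dC, map_zero, map_zero]
  | hadd x y hx hy => simp only [map_add, hx, hy]
  | hmul x y hx hy =>
    simp only [D.dmul, E.dmul, map_add, map_mul]
    rw [← br_I3 D E x]
    simp only [hx, hy, br_I4 D E, br_I1 D E, br_I2 D E, br_sss D E, D.dd0, E.dd0,
      pc_mul_zero, pc_zero_mul, pc_add_mul, pc_mul_add, add_zero, zero_add]
    abel

end Braid


-- ===== End-level relations =====

section EndRel

variable {k : Type} [Field k] {n : ℕ} {i : ℕ} {hi : i + 1 < n} (D : DOps k n i hi)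

lemma DOps.relp1 (v : PolC k n) :
    D.d (Y k n ⟨i, Nat.lt_of_succ_lt hi⟩ * v) =
      (-1 - Cc k n ⟨i, Nat.lt_of_succ_lt hi⟩ * Cc k n ⟨i + 1, hi⟩) * v +
        Y k n ⟨i + 1, hi⟩ * D.d v := by
  rw [D.dmul, D.dY0, D.sY0]

lemma DOps.relp2 (v : PolC k n) :
    D.d (Y k n ⟨i + 1, hi⟩ * v) =
      (1 - Cc k n ⟨i, Nat.lt_of_succ_lt hi⟩ * Cc k n ⟨i + 1, hi⟩) * v +
        Y k n ⟨i, Nat.lt_of_succ_lt hi⟩ * D.d v := by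
  rw [D.dmul, D.dY1, D.sY1]

lemma DOps.relp3 (j : Fin n) (h0 : (j : ℕ) ≠ i) (h1 : (j : ℕ) ≠ i + 1) (v : PolC k n) :
    D.d (Y k n j * v) = Y k n j * D.d v := by
  rw [D.dmul, D.dYo j h0 h1, D.sYo j h0 h1, pc_zero_mul, zero_add]

lemma DOps.relp4 (j : Fin n) (v : PolC k n) :
    D.d (Cc k n j * v) =
      Cc k n (Equiv.swap ⟨i, Nat.lt_of_succ_lt hi⟩ ⟨i + 1, hi⟩ j) * D.d v := by
  rw [D.dmul, D.dC, D.sC, pc_zero_mul, zero_add]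

lemma DOps.rel1 :
    D.d ∘ₗ LinearMap.mulLeft k (Y k n ⟨i, Nat.lt_of_succ_lt hi⟩) -
      LinearMap.mulLeft k (Y k n ⟨i + 1, hi⟩) ∘ₗ D.d =
    LinearMap.mulLeft k
      (-1 - Cc k n ⟨i, Nat.lt_of_succ_lt hi⟩ * Cc k n ⟨i + 1, hi⟩) := by
  refine LinearMap.ext fun v => ?_
  simp only [LinearMap.sub_apply, LinearMap.comp_apply, LinearMap.mulLeft_apply,
    D.relp1]
  abel

lemma DOps.rel2 :
    D.d ∘ₗ LinearMap.mulLeft k (Y k n ⟨i + 1, hi⟩) -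
      LinearMap.mulLeft k (Y k n ⟨i, Nat.lt_of_succ_lt hi⟩) ∘ₗ D.d =
    LinearMap.mulLeft k
      (1 - Cc k n ⟨i, Nat.lt_of_succ_lt hi⟩ * Cc k n ⟨i + 1, hi⟩) := by
  refine LinearMap.ext fun v => ?_
  simp only [LinearMap.sub_apply, LinearMap.comp_apply, LinearMap.mulLeft_apply,
    D.relp2]
  abel

lemma DOps.rel3 (j : Fin n) (h0 : (j : ℕ) ≠ i) (h1 : (j : ℕ) ≠ i + 1) :
    D.d ∘ₗ LinearMap.mulLeft k (Y k n j) = LinearMap.mulLeft k (Y k n j) ∘ₗ D.d := by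
  refine LinearMap.ext fun v => ?_
  simp only [LinearMap.comp_apply, LinearMap.mulLeft_apply, D.relp3 j h0 h1]

lemma DOps.rel4 (j : Fin n) :
    D.d ∘ₗ LinearMap.mulLeft k (Cc k n j) =
      LinearMap.mulLeft k
        (Cc k n (Equiv.swap ⟨i, Nat.lt_of_succ_lt hi⟩ ⟨i + 1, hi⟩ j)) ∘ₗ D.d := by
  refine LinearMap.ext fun v => ?_
  simp only [LinearMap.comp_apply, LinearMap.mulLeft_apply, D.relp4 j]

lemma DOps.rel5 : D.d ∘ₗ D.d = 0 := LinearMap.ext fun v => by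
  simp only [LinearMap.comp_apply, LinearMap.zero_apply, D.dd0]

lemma DOps.rel1e :
    D.d * LinearMap.mulLeft k (Y k n ⟨i, Nat.lt_of_succ_lt hi⟩) =
      LinearMap.mulLeft k (Y k n ⟨i + 1, hi⟩) * D.d +
        (-1 - LinearMap.mulLeft k (Cc k n ⟨i, Nat.lt_of_succ_lt hi⟩) *
          LinearMap.mulLeft k (Cc k n ⟨i + 1, hi⟩)) := by
  refine LinearMap.ext fun v => ?_
  simp only [Module.End.mul_apply, LinearMap.add_apply, LinearMap.sub_apply,
    LinearMap.neg_apply, Module.End.one_apply, LinearMap.mulLeft_apply, D.relp1,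
    pc_sub_mul, pc_neg_mul, pc_one_mul, pc_mul_assoc]
  abel

lemma DOps.rel2e :
    D.d * LinearMap.mulLeft k (Y k n ⟨i + 1, hi⟩) =
      LinearMap.mulLeft k (Y k n ⟨i, Nat.lt_of_succ_lt hi⟩) * D.d +
        (1 - LinearMap.mulLeft k (Cc k n ⟨i, Nat.lt_of_succ_lt hi⟩) *
          LinearMap.mulLeft k (Cc k n ⟨i + 1, hi⟩)) := by
  refine LinearMap.ext fun v => ?_
  simp only [Module.End.mul_apply, LinearMap.add_apply, LinearMap.sub_apply,
    LinearMap.neg_apply, Module.End.one_apply, LinearMap.mulLeft_apply, D.relp2,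
    pc_sub_mul, pc_neg_mul, pc_one_mul, pc_mul_assoc]
  abel

end EndRel

/-! The NilHecke Clifford algebra `NHC_n`, with generators `yᵢ`, `cᵢ`, `dᵢ`. -/

/-- `y`-generator inside the free algebra. -/
def yF (k : Type) [Field k] (n : ℕ) (i : Fin n) :
    FreeAlgebra k (Fin n ⊕ Fin n ⊕ Fin (n - 1)) := FreeAlgebra.ι k (Sum.inl i)

/-- `c`-generator inside the free algebra. -/
def cF (k : Type) [Field k] (n : ℕ) (i : Fin n) :
    FreeAlgebra k (Fin n ⊕ Fin n ⊕ Fin (n - 1)) := FreeAlgebra.ι k (Sum.inr (Sum.inl i))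

/-- `d`-generator inside the free algebra. -/
def dF (k : Type) [Field k] (n : ℕ) (a : Fin (n - 1)) :
    FreeAlgebra k (Fin n ⊕ Fin n ⊕ Fin (n - 1)) := FreeAlgebra.ι k (Sum.inr (Sum.inr a))

/-- For `a : Fin (n-1)`, the index `i` as an element of `Fin n`. -/
def fin0 (n : ℕ) (a : Fin (n - 1)) : Fin n := ⟨a.1, by have := a.isLt; omega⟩

/-- For `a : Fin (n-1)`, the index `i + 1` as an element of `Fin n`. -/
def fin1 (n : ℕ) (a : Fin (n - 1)) : Fin n := ⟨a.1 + 1, by have := a.isLt; omega⟩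

inductive NHRel (k : Type) [Field k] (n : ℕ) :
    FreeAlgebra k (Fin n ⊕ Fin n ⊕ Fin (n - 1)) →
    FreeAlgebra k (Fin n ⊕ Fin n ⊕ Fin (n - 1)) → Prop
  | ycomm (i j : Fin n) : NHRel k n (yF k n i * yF k n j) (yF k n j * yF k n i)
  | cAnticomm (i j : Fin n) (hij : i ≠ j) :
      NHRel k n (cF k n i * cF k n j) (-(cF k n j * cF k n i))
  | cSq (i : Fin n) : NHRel k n (cF k n i * cF k n i) 1
  | ycSame (i : Fin n) : NHRel k n (yF k n i * cF k n i) (-(cF k n i * yF k n i))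
  | ycDiff (i j : Fin n) (hij : i ≠ j) :
      NHRel k n (yF k n i * cF k n j) (cF k n j * yF k n i)
  | dy0 (a : Fin (n - 1)) :
      NHRel k n (dF k n a * yF k n (fin0 n a))
        (yF k n (fin1 n a) * dF k n a + (-1 - cF k n (fin0 n a) * cF k n (fin1 n a)))
  | dy1 (a : Fin (n - 1)) :
      NHRel k n (dF k n a * yF k n (fin1 n a))
        (yF k n (fin0 n a) * dF k n a + (1 - cF k n (fin0 n a) * cF k n (fin1 n a)))
  | dyOther (a : Fin (n - 1)) (j : Fin n) (h0 : j ≠ fin0 n a) (h1 : j ≠ fin1 n a) :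
      NHRel k n (dF k n a * yF k n j) (yF k n j * dF k n a)
  | dc (a : Fin (n - 1)) (j : Fin n) :
      NHRel k n (dF k n a * cF k n j)
        (cF k n (Equiv.swap (fin0 n a) (fin1 n a) j) * dF k n a)
  | dsq (a : Fin (n - 1)) : NHRel k n (dF k n a * dF k n a) 0
  | dfar (a b : Fin (n - 1)) (h : a.1 + 1 < b.1 ∨ b.1 + 1 < a.1) :
      NHRel k n (dF k n a * dF k n b) (dF k n b * dF k n a)
  | dbraid (a b : Fin (n - 1)) (h : b.1 = a.1 + 1) :
      NHRel k n (dF k n a * dF k n b * dF k n a) (dF k n b * dF k n a * dF k n b)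

/-- The NilHecke Clifford algebra `NHC_n`. -/
abbrev NHC (k : Type) [Field k] (n : ℕ) := RingQuot (NHRel k n)

def nY (k : Type) [Field k] (n : ℕ) (i : Fin n) : NHC k n :=
  RingQuot.mkAlgHom k (NHRel k n) (yF k n i)

def nC (k : Type) [Field k] (n : ℕ) (i : Fin n) : NHC k n :=
  RingQuot.mkAlgHom k (NHRel k n) (cF k n i)

def nD (k : Type) [Field k] (n : ℕ) (a : Fin (n - 1)) : NHC k n :=
  RingQuot.mkAlgHom k (NHRel k n) (dF k n a)

/-- the left-multiplication operators by `yᵢ`, `cᵢ` together with the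
Clifford Demazure operators `dᵢ` satisfy the defining relations of the NilHecke Clifford
algebra, as endomorphisms of `PolC_n`; consequently `PolC_n` carries a representation of
`NHC_n` in which `yᵢ`, `cᵢ` act by left multiplication and `dᵢ` by the Demazure operator. -/
theorem demazure_satisfies_nilHeckeClifford_relations
    (k : Type) [Field k] (n : ℕ) (hn : 2 ≤ n)
    (si : ∀ i : ℕ, i + 1 < n → (PolC k n →ₐ[k] PolC k n))
    (hsi : ∀ (i : ℕ) (hi : i + 1 < n) (j : Fin n),
      (si i hi) (Y k n j) = Y k n (Equiv.swap ⟨i, by omega⟩ ⟨i + 1, hi⟩ j) ∧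
      (si i hi) (Cc k n j) = Cc k n (Equiv.swap ⟨i, by omega⟩ ⟨i + 1, hi⟩ j))
    (d : ∀ i : ℕ, i + 1 < n → (PolC k n →ₗ[k] PolC k n))
    (hd : ∀ (i : ℕ) (hi : i + 1 < n), DemSpec k n i hi (si i hi) (d i hi)) :
    (∀ (i : ℕ) (hi : i + 1 < n),
      (d i hi) ∘ₗ LinearMap.mulLeft k (Y k n ⟨i, by omega⟩) -
          LinearMap.mulLeft k (Y k n ⟨i + 1, hi⟩) ∘ₗ (d i hi) =
        LinearMap.mulLeft k (-1 - Cc k n ⟨i, by omega⟩ * Cc k n ⟨i + 1, hi⟩)) ∧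
    (∀ (i : ℕ) (hi : i + 1 < n),
      (d i hi) ∘ₗ LinearMap.mulLeft k (Y k n ⟨i + 1, hi⟩) -
          LinearMap.mulLeft k (Y k n ⟨i, by omega⟩) ∘ₗ (d i hi) =
        LinearMap.mulLeft k (1 - Cc k n ⟨i, by omega⟩ * Cc k n ⟨i + 1, hi⟩)) ∧
    (∀ (i : ℕ) (hi : i + 1 < n) (j : Fin n), (j : ℕ) ≠ i → (j : ℕ) ≠ i + 1 →
      (d i hi) ∘ₗ LinearMap.mulLeft k (Y k n j) = LinearMap.mulLeft k (Y k n j) ∘ₗ (d i hi)) ∧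
    (∀ (i : ℕ) (hi : i + 1 < n) (j : Fin n),
      (d i hi) ∘ₗ LinearMap.mulLeft k (Cc k n j) =
        LinearMap.mulLeft k (Cc k n (Equiv.swap ⟨i, by omega⟩ ⟨i + 1, hi⟩ j)) ∘ₗ (d i hi)) ∧
    (∀ (i : ℕ) (hi : i + 1 < n), (d i hi) ∘ₗ (d i hi) = 0) ∧
    (∀ (i j : ℕ) (hi : i + 1 < n) (hj : j + 1 < n), i + 1 < j ∨ j + 1 < i →
      (d i hi) ∘ₗ (d j hj) = (d j hj) ∘ₗ (d i hi)) ∧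
    (∀ (i : ℕ) (hi : i + 1 < n) (hi2 : i + 1 + 1 < n),
      (d i hi) ∘ₗ (d (i + 1) hi2) ∘ₗ (d i hi) =
        (d (i + 1) hi2) ∘ₗ (d i hi) ∘ₗ (d (i + 1) hi2)) ∧
    (∃ Φ : NHC k n →ₐ[k] Module.End k (PolC k n),
      (∀ i : Fin n, Φ (nY k n i) = LinearMap.mulLeft k (Y k n i)) ∧
      (∀ i : Fin n, Φ (nC k n i) = LinearMap.mulLeft k (Cc k n i)) ∧
      (∀ a : Fin (n - 1), Φ (nD k n a) = d a.1 (by have := a.isLt; omega))) := by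
  let mk : ∀ (i : ℕ) (hi : i + 1 < n), DOps k n i hi :=
    fun i hi => ⟨si i hi, d i hi, hsi i hi, hd i hi⟩
  refine ⟨fun i hi => (mk i hi).rel1, fun i hi => (mk i hi).rel2,
    fun i hi j h0 h1 => (mk i hi).rel3 j h0 h1,
    fun i hi j => (mk i hi).rel4 j,
    fun i hi => (mk i hi).rel5, ?_, ?_, ?_⟩
  · intro i j hi hj h
    rcases h with h|h
    · exact LinearMap.ext fun f => far_dd h (mk i hi) (mk j hj) f
    · exact LinearMap.ext fun f => (far_dd h (mk j hj) (mk i hi) f).symm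
  · intro i hi hi2
    exact LinearMap.ext fun f => br_ddd (mk i hi) (mk (i + 1) hi2) f
  · have ha : ∀ a : Fin (n - 1), (a : ℕ) + 1 < n := fun a => by have := a.isLt; omega
    set G : Fin n ⊕ Fin n ⊕ Fin (n - 1) → Module.End k (PolC k n) :=
      Sum.elim (fun i => LinearMap.mulLeft k (Y k n i))
        (Sum.elim (fun i => LinearMap.mulLeft k (Cc k n i))
          (fun a => d a.1 (ha a))) with hG
    have hW : ∀ ⦃x y⦄, NHRel k n x y →
        FreeAlgebra.lift k G x = FreeAlgebra.lift k G y := by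
      intro x y h
      induction h with
      | ycomm i j =>
        simp only [yF, map_mul, FreeAlgebra.lift_ι_apply, hG, Sum.elim_inl]
        refine LinearMap.ext fun v => ?_
        simp only [Module.End.mul_apply, LinearMap.mulLeft_apply]
        rw [← pc_mul_assoc, Y_comm i j, pc_mul_assoc]
      | cAnticomm i j hij =>
        simp only [cF, map_mul, map_neg, FreeAlgebra.lift_ι_apply, hG,
          Sum.elim_inr, Sum.elim_inl]
        refine LinearMap.ext fun v => ?_
        simp only [Module.End.mul_apply, LinearMap.mulLeft_apply, LinearMap.neg_apply]
        rw [← pc_mul_assoc, C_anti hij, pc_neg_mul, pc_mul_assoc]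
      | cSq i =>
        simp only [cF, map_mul, map_one, FreeAlgebra.lift_ι_apply, hG,
          Sum.elim_inr, Sum.elim_inl]
        refine LinearMap.ext fun v => ?_
        simp only [Module.End.mul_apply, LinearMap.mulLeft_apply, Module.End.one_apply]
        rw [← pc_mul_assoc, C_sq, pc_one_mul]
      | ycSame i =>
        simp only [yF, cF, map_mul, map_neg, FreeAlgebra.lift_ι_apply, hG,
          Sum.elim_inr, Sum.elim_inl]
        refine LinearMap.ext fun v => ?_
        simp only [Module.End.mul_apply, LinearMap.mulLeft_apply, LinearMap.neg_apply]
        rw [← pc_mul_assoc, YC_same, pc_neg_mul, pc_mul_assoc]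
      | ycDiff i j hij =>
        simp only [yF, cF, map_mul, FreeAlgebra.lift_ι_apply, hG,
          Sum.elim_inr, Sum.elim_inl]
        refine LinearMap.ext fun v => ?_
        simp only [Module.End.mul_apply, LinearMap.mulLeft_apply]
        rw [← pc_mul_assoc, YC_diff hij, pc_mul_assoc]
      | dy0 a =>
        simp only [yF, cF, dF, fin0, fin1, map_mul, map_add, map_sub, map_neg,
          map_one, FreeAlgebra.lift_ι_apply, hG, Sum.elim_inl, Sum.elim_inr]
        exact (mk a.1 (ha a)).rel1e
      | dy1 a =>
        simp only [yF, cF, dF, fin0, fin1, map_mul, map_add, map_sub, map_one,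
          FreeAlgebra.lift_ι_apply, hG, Sum.elim_inl, Sum.elim_inr]
        exact (mk a.1 (ha a)).rel2e
      | dyOther a j h0 h1 =>
        simp only [yF, dF, map_mul, FreeAlgebra.lift_ι_apply, hG,
          Sum.elim_inl, Sum.elim_inr]
        refine LinearMap.ext fun v => ?_
        simp only [Module.End.mul_apply, LinearMap.mulLeft_apply]
        exact (mk a.1 (ha a)).relp3 j (fun hc => h0 (Fin.ext hc))
          (fun hc => h1 (Fin.ext hc)) v
      | dc a j =>
        simp only [cF, dF, fin0, fin1, map_mul, FreeAlgebra.lift_ι_apply, hG,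
          Sum.elim_inl, Sum.elim_inr]
        refine LinearMap.ext fun v => ?_
        simp only [Module.End.mul_apply, LinearMap.mulLeft_apply]
        exact (mk a.1 (ha a)).relp4 j v
      | dsq a =>
        simp only [dF, map_mul, map_zero, FreeAlgebra.lift_ι_apply, hG, Sum.elim_inr]
        refine LinearMap.ext fun v => ?_
        simp only [Module.End.mul_apply, LinearMap.zero_apply]
        exact (mk a.1 (ha a)).dd0 v
      | dfar a b hfar =>
        simp only [dF, map_mul, FreeAlgebra.lift_ι_apply, hG, Sum.elim_inr]
        refine LinearMap.ext fun v => ?_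
        simp only [Module.End.mul_apply]
        rcases hfar with h|h
        · exact far_dd h (mk a.1 (ha a)) (mk b.1 (ha b)) v
        · exact (far_dd h (mk b.1 (ha b)) (mk a.1 (ha a)) v).symm
      | dbraid a b hbr =>
        simp only [dF, map_mul, FreeAlgebra.lift_ι_apply, hG, Sum.elim_inr]
        refine LinearMap.ext fun v => ?_
        simp only [Module.End.mul_apply]
        rcases b with ⟨bv, hb⟩
        have h' : bv = (a : ℕ) + 1 := hbr
        subst h'
        exact br_ddd (mk a.1 (ha a)) (mk ((a : ℕ) + 1) (by omega)) v
    refine ⟨RingQuot.liftAlgHom k ⟨FreeAlgebra.lift k G, hW⟩, fun i => ?_, fun i => ?_,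
      fun a => ?_⟩
    · rw [nY, RingQuot.liftAlgHom_mkAlgHom_apply, yF, FreeAlgebra.lift_ι_apply, hG,
        Sum.elim_inl]
    · rw [nC, RingQuot.liftAlgHom_mkAlgHom_apply, cF, FreeAlgebra.lift_ι_apply, hG,
        Sum.elim_inr, Sum.elim_inl]
    · rw [nD, RingQuot.liftAlgHom_mkAlgHom_apply, dF, FreeAlgebra.lift_ι_apply, hG,
        Sum.elim_inr, Sum.elim_inr]

end
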